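/- For every integer K ≥ 5 and every η ≥ 1, Φ(Φ⁻¹(1 - 1/K) + η) ≥ 1 - (1/K)·√(π/2)·e^{-η²/2}·e^{-η·√(log(K²/(4π log K)))}. -/

import Mathlib

/-!
Write `T x = ∫_x^∞ e^{-u²/2} du`, so that `1 - Φ = T / √(2π)`. Translating the variable of
integration gives `T (z + η) ≤ e^{-ηz - η²/2} T z` for `η ≥ 0`, so for `z = Φ⁻¹(1 - 1/K)` it
suffices to show `z ≥ b := √(log (K² / (4π log K)))`, i.e. `T b ≥ √(2π) / K`. The point `b`
satisfies `e^{-b²/2} = √(4π log K) / K`, and Birnbaum's bound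
`T x ≥ e^{-x²/2} (√(x² + 4) - x) / 2` turns this into an elementary inequality in `log K`.
The factor `√(π/2) ≥ 1` is slack.
-/

open Real Set

/-- The standard normal cumulative distribution function. -/
noncomputable def Phi (x : ℝ) : ℝ :=
  (Real.sqrt (2 * π))⁻¹ * ∫ u in Set.Iic x, Real.exp (-u ^ 2 / 2)

/-- The inverse of the standard normal cdf. -/
noncomputable def PhiInv : ℝ → ℝ := Function.invFun Phi

open MeasureTheory ProbabilityTheory Filter Topology

noncomputable def gaussTail (x : ℝ) : ℝ := ∫ u in Ioi x, exp (-u ^ 2 / 2)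

noncomputable def birnbaumBound (x : ℝ) : ℝ := exp (-x ^ 2 / 2) * ((√(x ^ 2 + 4) - x) / 2)

lemma integrable_exp_neg_sq_div_two : Integrable fun u : ℝ => exp (-u ^ 2 / 2) := by
  convert integrable_exp_neg_mul_sq (b := 2⁻¹) (by norm_num) using 3
  ring

lemma integral_exp_neg_sq_div_two : ∫ u : ℝ, exp (-u ^ 2 / 2) = √(2 * π) := by
  convert integral_gaussian (2⁻¹ : ℝ) using 4
  · ring
  · rw [div_inv_eq_mul, mul_comm]

lemma Phi_eq_one_sub_gaussTail (x : ℝ) : Phi x = 1 - (√(2 * π))⁻¹ * gaussTail x := by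
  have hsplit := intervalIntegral.integral_Iic_add_Ioi (b := x)
    integrable_exp_neg_sq_div_two.integrableOn integrable_exp_neg_sq_div_two.integrableOn
  rw [integral_exp_neg_sq_div_two, ← eq_sub_iff_add_eq] at hsplit
  rw [Phi, hsplit, mul_sub, inv_mul_cancel₀ (by positivity), gaussTail]

lemma hasDerivAt_gaussTail (x : ℝ) : HasDerivAt gaussTail (-exp (-x ^ 2 / 2)) x := by
  have hcont : Continuous fun u : ℝ => exp (-u ^ 2 / 2) := by fun_prop
  have hleft := intervalIntegral.integral_hasDerivAt_left (a := x) (b := 0)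
    integrable_exp_neg_sq_div_two.intervalIntegrable
    hcont.aestronglyMeasurable.stronglyMeasurableAtFilter hcont.continuousAt
  refine (hleft.add_const (gaussTail 0)).congr_of_eventuallyEq (Eventually.of_forall fun _ => ?_)
  exact (intervalIntegral.integral_interval_add_Ioi
    integrable_exp_neg_sq_div_two.integrableOn integrable_exp_neg_sq_div_two.integrableOn).symm

lemma hasDerivAt_Phi (x : ℝ) : HasDerivAt Phi ((√(2 * π))⁻¹ * exp (-x ^ 2 / 2)) x := by
  rw [funext Phi_eq_one_sub_gaussTail]
  simpa using ((hasDerivAt_gaussTail x).const_mul (√(2 * π))⁻¹).const_sub 1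

lemma Phi_strictMono : StrictMono Phi :=
  strictMono_of_hasDerivAt_pos hasDerivAt_Phi fun _ => by positivity

lemma Phi_eq_cdf : Phi = cdf (gaussianReal 0 1) := by
  ext x
  rw [cdf_eq_real, measureReal_def, gaussianReal_apply_eq_integral _ one_ne_zero,
    ENNReal.toReal_ofReal
      (setIntegral_nonneg measurableSet_Iic fun _ _ => gaussianPDFReal_nonneg _ _ _),
    Phi, ← integral_const_mul]
  simp [gaussianPDFReal]

lemma Phi_PhiInv {p : ℝ} (hp0 : 0 < p) (hp1 : p < 1) : Phi (PhiInv p) = p := by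
  have hcont : Continuous Phi :=
    continuous_iff_continuousAt.2 fun x => (hasDerivAt_Phi x).continuousAt
  have hbot := (Phi_eq_cdf ▸ tendsto_cdf_atBot (gaussianReal 0 1)).eventually (gt_mem_nhds hp0)
  have htop := (Phi_eq_cdf ▸ tendsto_cdf_atTop (gaussianReal 0 1)).eventually (lt_mem_nhds hp1)
  exact Function.invFun_eq <| mem_range_of_exists_le_of_exists_ge hcont
    (hbot.exists.imp fun _ => le_of_lt) (htop.exists.imp fun _ => le_of_lt)

lemma tendsto_gaussTail_atTop : Tendsto gaussTail atTop (𝓝 0) := by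
  have hPhi := Phi_eq_cdf ▸ tendsto_cdf_atTop (gaussianReal 0 1)
  have htail : gaussTail = fun x => √(2 * π) * (1 - Phi x) := by
    ext x
    rw [Phi_eq_one_sub_gaussTail, sub_sub_cancel, ← mul_assoc, mul_inv_cancel₀ (by positivity),
      one_mul]
  simpa [htail] using ((tendsto_const_nhds (x := (1 : ℝ))).sub hPhi).const_mul √(2 * π)

lemma gaussTail_add_le (z : ℝ) {η : ℝ} (hη : 0 ≤ η) :
    gaussTail (z + η) ≤ exp (-η * z - η ^ 2 / 2) * gaussTail z := by
  have hshift : gaussTail (z + η) = ∫ t in Ioi z, exp (-(t + η) ^ 2 / 2) := by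
    rw [gaussTail, ← image_add_const_Ioi,
      (measurePreserving_add_right volume η).setIntegral_image_emb]
    exact (Homeomorph.addRight η).isClosedEmbedding.measurableEmbedding
  rw [hshift, gaussTail, ← integral_const_mul]
  refine setIntegral_mono_on (integrable_exp_neg_sq_div_two.comp_add_right η).integrableOn
    (integrable_exp_neg_sq_div_two.const_mul _).integrableOn measurableSet_Ioi fun t ht => ?_
  rw [← exp_add]
  gcongr
  nlinarith [mul_le_mul_of_nonneg_left (le_of_lt (mem_Ioi.1 ht)) hη]

lemma one_sub_Phi_add_le (z : ℝ) {η : ℝ} (hη : 0 ≤ η) :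
    1 - Phi (z + η) ≤ exp (-η * z - η ^ 2 / 2) * (1 - Phi z) := by
  simp only [Phi_eq_one_sub_gaussTail, sub_sub_cancel, mul_left_comm _ (√(2 * π))⁻¹]
  gcongr
  exact gaussTail_add_le z hη

lemma hasDerivAt_birnbaumBound (x : ℝ) :
    HasDerivAt birnbaumBound
      (-exp (-x ^ 2 / 2) + exp (-x ^ 2 / 2) *
        ((√(x ^ 2 + 4) * (x ^ 2 + 1) - (x ^ 3 + 3 * x)) / (2 * √(x ^ 2 + 4)))) x := by
  have hs : 0 < √(x ^ 2 + 4) := by positivity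
  have hexp : HasDerivAt (fun y => exp (-y ^ 2 / 2)) (exp (-x ^ 2 / 2) * -x) x :=
    ((hasDerivAt_pow 2 x).fun_neg.div_const 2).exp.congr_deriv (by push_cast; ring)
  have hsqrt : HasDerivAt (fun y => √(y ^ 2 + 4)) (x / √(x ^ 2 + 4)) x :=
    (((hasDerivAt_pow 2 x).add_const 4).sqrt (by positivity)).congr_deriv (by
      field_simp; push_cast; ring)
  refine (hexp.mul ((hsqrt.fun_sub (hasDerivAt_id' x)).div_const 2)).congr_deriv ?_
  field_simp
  linear_combination (-x) * sq_sqrt (by positivity : (0 : ℝ) ≤ x ^ 2 + 4)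

lemma tendsto_birnbaumBound_atTop : Tendsto birnbaumBound atTop (𝓝 0) := by
  have hexp : Tendsto (fun y : ℝ => exp (-y ^ 2 / 2)) atTop (𝓝 0) := by
    refine tendsto_exp_atBot.comp ?_
    simpa only [Function.comp_def, neg_div] using
      tendsto_neg_atTop_atBot.comp ((tendsto_pow_atTop two_ne_zero).atTop_div_const two_pos)
  refine tendsto_of_tendsto_of_tendsto_of_le_of_le' tendsto_const_nhds hexp ?_ ?_ <;>
    filter_upwards [eventually_ge_atTop 0] with y hy
  · have : y ≤ √(y ^ 2 + 4) := le_sqrt_of_sq_le (by linarith)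
    exact mul_nonneg (exp_pos _).le (by linarith)
  · have : √(y ^ 2 + 4) ≤ y + 2 := sqrt_le_iff.2 ⟨by linarith, by nlinarith⟩
    exact mul_le_of_le_one_right (exp_pos _).le (by linarith)

/-- Birnbaum's inequality: `gaussTail - birnbaumBound` has nonpositive derivative and tends to
`0` at infinity. -/
lemma birnbaumBound_le_gaussTail (x : ℝ) : birnbaumBound x ≤ gaussTail x := by
  have hanti := antitone_of_hasDerivAt_nonpos
    (fun y => (hasDerivAt_gaussTail y).sub (hasDerivAt_birnbaumBound y)) fun y => by
    have hkey : y ^ 3 + 3 * y ≤ √(y ^ 2 + 4) * (y ^ 2 + 1) := by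
      refine (abs_le_of_sq_le_sq' ?_ (by positivity)).2
      rw [mul_pow, sq_sqrt (by positivity)]
      -- `(y ^ 2 + 4) * (y ^ 2 + 1) ^ 2 = (y ^ 3 + 3 * y) ^ 2 + 4`
      nlinarith
    have : 0 ≤ exp (-y ^ 2 / 2) *
        ((√(y ^ 2 + 4) * (y ^ 2 + 1) - (y ^ 3 + 3 * y)) / (2 * √(y ^ 2 + 4))) := by
      have := sub_nonneg.2 hkey
      positivity
    simp only [Pi.zero_apply]
    linarith
  have hlim := tendsto_gaussTail_atTop.sub tendsto_birnbaumBound_atTop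
  rw [sub_zero] at hlim
  exact sub_nonneg.1 (le_of_tendsto hlim (eventually_ge_atTop x |>.mono fun _ hy => hanti hy))

lemma two_le_mul_sqrt_sq_add_four_sub {b c : ℝ} (hc : 0 ≤ c) (h : c * b ≤ c ^ 2 - 1) :
    2 ≤ c * (√(b ^ 2 + 4) - b) := by
  have hs := sq_sqrt (by positivity : (0 : ℝ) ≤ b ^ 2 + 4)
  have : 2 + c * b ≤ c * √(b ^ 2 + 4) :=
    (abs_le_of_sq_le_sq' (by nlinarith) (by positivity)).2
  linarith

lemma one_lt_log_of_five_le {K : ℝ} (hK : 5 ≤ K) : 1 < log K := by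
  rw [lt_log_iff_exp_lt (by linarith)]
  linarith [exp_one_lt_d9]

lemma four_mul_pi_mul_log_lt_sq {K : ℝ} (hK : 5 ≤ K) : 4 * π * log K < K ^ 2 := by
  have hlog : log K ≤ K / exp 1 := by
    have := log_le_sub_one_of_pos (by positivity : 0 < K / exp 1)
    rw [log_div (by positivity) (exp_pos 1).ne', log_exp] at this
    linarith
  calc 4 * π * log K ≤ 4 * π * (K / exp 1) := by gcongr
    _ < 5 * K := by
      rw [mul_div_assoc', div_lt_iff₀ (exp_pos 1)]
      nlinarith [pi_lt_d2, exp_one_gt_d9]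
    _ ≤ K ^ 2 := by nlinarith

lemma two_le_log_four_mul_pi_mul_log {K : ℝ} (hK : 5 ≤ K) : 2 ≤ log (4 * π * log K) := by
  rw [le_log_iff_exp_le (by nlinarith [pi_pos, one_lt_log_of_five_le hK]),
    show (2 : ℝ) = 1 + 1 by norm_num, exp_add]
  nlinarith [pi_gt_three, one_lt_log_of_five_le hK, exp_one_lt_d9, exp_pos 1]

lemma div_le_gaussTail_sqrt_log {K : ℝ} (hK : 5 ≤ K) :
    √(2 * π) / K ≤ gaussTail √(log (K ^ 2 / (4 * π * log K))) := by
  set L := log K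
  have hL : 1 < L := one_lt_log_of_five_le hK
  have h4L : 0 < 4 * π * L := by positivity
  set b := √(log (K ^ 2 / (4 * π * L)))
  have hb2 : b ^ 2 = 2 * L - log (4 * π * L) := by
    have hA : 1 < K ^ 2 / (4 * π * L) := (one_lt_div h4L).2 (four_mul_pi_mul_log_lt_sq hK)
    rw [sq_sqrt (log_pos hA).le, log_div (by positivity) h4L.ne', log_pow]
    push_cast
    ring
  have hgauss : exp (-b ^ 2 / 2) = √(2 * π) * √(2 * L) / K := by
    rw [hb2, show -(2 * L - log (4 * π * L)) / 2 = -L + log (4 * π * L) * (1 / 2) by ring,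
      exp_add, exp_neg, exp_log (by linarith), ← rpow_def_of_pos h4L, ← sqrt_eq_rpow,
      ← sqrt_mul (by positivity)]
    ring_nf
  have hcb : √(2 * L) * b ≤ √(2 * L) ^ 2 - 1 := by
    rw [sq_sqrt (by linarith)]
    refine (abs_le_of_sq_le_sq' ?_ (by linarith)).2
    rw [mul_pow, sq_sqrt (by linarith), hb2]
    nlinarith [two_le_log_four_mul_pi_mul_log hK]
  calc √(2 * π) / K ≤ √(2 * π) / K * (√(2 * L) * (√(b ^ 2 + 4) - b) / 2) := by
        have := two_le_mul_sqrt_sq_add_four_sub (sqrt_nonneg _) hcb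
        have : 0 ≤ √(2 * π) / K := by positivity
        nlinarith
    _ = birnbaumBound b := by rw [birnbaumBound, hgauss]; ring
    _ ≤ gaussTail b := birnbaumBound_le_gaussTail b

lemma Phi_PhiInv_one_sub_inv {K : ℝ} (hK : 1 < K) : Phi (PhiInv (1 - 1 / K)) = 1 - 1 / K :=
  Phi_PhiInv (by rw [sub_pos, div_lt_one] <;> linarith) (sub_lt_self _ (by positivity))

lemma sqrt_log_le_PhiInv {K : ℝ} (hK : 5 ≤ K) :
    √(log (K ^ 2 / (4 * π * log K))) ≤ PhiInv (1 - 1 / K) := by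
  rw [← Phi_strictMono.le_iff_le, Phi_PhiInv_one_sub_inv (by linarith), Phi_eq_one_sub_gaussTail, sub_le_sub_iff_left,
    le_inv_mul_iff₀ (by positivity), ← div_eq_mul_one_div]
  exact div_le_gaussTail_sqrt_log hK

theorem phi_shift_lower_bound_K (K : ℕ) (hK : 5 ≤ K) (η : ℝ) (hη : 1 ≤ η) :
    Phi (PhiInv (1 - 1 / (K : ℝ)) + η) ≥
      1 - (1 / (K : ℝ)) * Real.sqrt (π / 2) * Real.exp (-η ^ 2 / 2) *
        Real.exp (-η * Real.sqrt (Real.log ((K : ℝ) ^ 2 / (4 * π * Real.log K)))) := by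
  have hK5 : (5 : ℝ) ≤ K := by exact_mod_cast hK
  have hp : Phi (PhiInv (1 - 1 / (K : ℝ))) = 1 - 1 / K := Phi_PhiInv_one_sub_inv (by linarith)
  set z := PhiInv (1 - 1 / (K : ℝ))
  set b := √(log ((K : ℝ) ^ 2 / (4 * π * log K)))
  have hbz : b ≤ z := sqrt_log_le_PhiInv hK5
  have hexp : exp (-η * z - η ^ 2 / 2) ≤ √(π / 2) * exp (-η ^ 2 / 2) * exp (-η * b) := by
    calc exp (-η * z - η ^ 2 / 2) ≤ exp (-η ^ 2 / 2) * exp (-η * b) := by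
          rw [← exp_add]
          gcongr
          nlinarith
      _ ≤ √(π / 2) * (exp (-η ^ 2 / 2) * exp (-η * b)) :=
          le_mul_of_one_le_left (by positivity) (one_le_sqrt.2 (by linarith [pi_gt_three]))
      _ = √(π / 2) * exp (-η ^ 2 / 2) * exp (-η * b) := by ring
  rw [ge_iff_le, sub_le_comm]
  calc 1 - Phi (z + η) ≤ exp (-η * z - η ^ 2 / 2) * (1 - Phi z) :=
        one_sub_Phi_add_le z (by linarith)
    _ = 1 / K * exp (-η * z - η ^ 2 / 2) := by rw [hp, sub_sub_cancel, mul_comm]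
    _ ≤ 1 / K * √(π / 2) * exp (-η ^ 2 / 2) * exp (-η * b) := by
        rw [mul_assoc, mul_assoc, ← mul_assoc √(π / 2)]
        gcongr
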